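/- Let a ∈ ℂ^n be nonzero, x ∈ ℂ^n, and y_r ≥ 0 a real number. Define x⁺ = x + ((√(y_r)·phase(⟨a,x⟩) − ⟨a,x⟩)/‖a‖₂²)·a. Then |⟨a,x⁺⟩| = √(y_r), and for every w ∈ ℂ^n with |⟨a,w⟩| = √(y_r) one has ‖x⁺ − x‖₂ ≤ ‖w − x‖₂. That is, the simple Kaczmarz update is a metric projection of x onto the nonconvex set { w ∈ ℂ^n : |⟨a,w⟩| = √(y_r) }. -/

import Mathlib

open scoped BigOperators ComplexConjugate

/-- phase(w) = w/|w| if w ≠ 0, else 1. -/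
noncomputable def phase (w : ℂ) : ℂ := if w = 0 then 1 else w / ((‖w‖ : ℝ) : ℂ)

/-- Euclidean norm of a complex vector. -/
noncomputable def evnorm {ι : Type*} [Fintype ι] (v : ι → ℂ) : ℝ :=
  Real.sqrt (∑ i, ‖v i‖ ^ 2)

/-- Euclidean norm of a real vector. -/
noncomputable def rvnorm {ι : Type*} [Fintype ι] (v : ι → ℝ) : ℝ :=
  Real.sqrt (∑ i, (v i) ^ 2)

/-- Standard Hermitian inner product, conjugate-linear in the first argument. -/
noncomputable def hinner {n : ℕ} (a x : Fin n → ℂ) : ℂ := ∑ i, conj (a i) * x i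

/-- dist(x, x̂) = min over unimodular ω of ‖x − ω·x̂‖₂. -/
noncomputable def pdist {n : ℕ} (x xhat : Fin n → ℂ) : ℝ :=
  ⨅ ω : {ω : ℂ // ‖ω‖ = 1}, evnorm (x - (ω : ℂ) • xhat)

/-- Operator (spectral) norm of a complex matrix w.r.t. Euclidean norms. -/
noncomputable def matOpNorm {ι κ : Type*} [Fintype ι] [Fintype κ] [DecidableEq κ]
    (M : Matrix ι κ ℂ) : ℝ :=
  ‖LinearMap.toContinuousLinearMap (Matrix.toEuclideanLin M)‖

/-!
The update replaces `⟨a, x⟩` by the point of modulus `t = √yᵣ` on the same ray, moving `x` along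
`a` by `|t - |⟨a, x⟩|| / ‖a‖`. For any `w` with `|⟨a, w⟩| = t`, the reverse triangle inequality and
Cauchy–Schwarz give `|t - |⟨a, x⟩|| ≤ |⟨a, w - x⟩| ≤ ‖a‖ ‖w - x‖`.
-/

open scoped InnerProductSpace

lemma norm_phase (w : ℂ) : ‖phase w‖ = 1 := by
  by_cases hw : w = 0 <;> simp [phase, hw]

lemma ofReal_norm_mul_phase (w : ℂ) : (‖w‖ : ℂ) * phase w = w := by
  by_cases hw : w = 0
  · simp [hw]
  · rw [phase, if_neg hw, mul_div_cancel₀]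
    exact_mod_cast norm_ne_zero_iff.mpr hw

lemma norm_ofReal_mul_phase_sub {t : ℝ} (w : ℂ) :
    ‖(t : ℂ) * phase w - w‖ = |t - ‖w‖| := by
  have h : (t : ℂ) * phase w - w = ((t - ‖w‖ : ℝ) : ℂ) * phase w := by
    nth_rewrite 2 [← ofReal_norm_mul_phase w]
    push_cast
    ring
  rw [h, norm_mul, norm_phase, mul_one, Complex.norm_real, Real.norm_eq_abs]

section Kaczmarz

variable {E : Type*} [NormedAddCommGroup E] [InnerProductSpace ℂ E]

noncomputable def kaczmarzStep (a x : E) (t : ℝ) : E :=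
  x + (((t : ℂ) * phase ⟪a, x⟫_ℂ - ⟪a, x⟫_ℂ) / ((‖a‖ ^ 2 : ℝ) : ℂ)) • a

lemma inner_add_div_norm_sq_smul {a : E} (ha : a ≠ 0) (x : E) (c : ℂ) :
    ⟪a, x + (c / ((‖a‖ ^ 2 : ℝ) : ℂ)) • a⟫_ℂ = ⟪a, x⟫_ℂ + c := by
  have : ((‖a‖ ^ 2 : ℝ) : ℂ) ≠ 0 := by exact_mod_cast pow_ne_zero 2 (norm_ne_zero_iff.mpr ha)
  rw [inner_add_right, inner_smul_right, inner_self_eq_norm_sq_to_K]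
  exact congrArg _ (by exact_mod_cast div_mul_cancel₀ c this)

lemma norm_div_norm_sq_smul (a : E) (c : ℂ) :
    ‖(c / ((‖a‖ ^ 2 : ℝ) : ℂ)) • a‖ = ‖c‖ / ‖a‖ := by
  rcases eq_or_ne a 0 with rfl | ha
  · simp
  rw [norm_smul, norm_div, Complex.norm_real, Real.norm_eq_abs, abs_of_nonneg (by positivity)]
  field_simp [norm_ne_zero_iff.mpr ha]

theorem norm_inner_kaczmarzStep {a : E} (ha : a ≠ 0) (x : E) {t : ℝ} (ht : 0 ≤ t) :
    ‖⟪a, kaczmarzStep a x t⟫_ℂ‖ = t := by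
  rw [kaczmarzStep, inner_add_div_norm_sq_smul ha, add_sub_cancel, norm_mul, norm_phase,
    mul_one, Complex.norm_real, Real.norm_of_nonneg ht]

lemma norm_kaczmarzStep_sub (a x : E) (t : ℝ) :
    ‖kaczmarzStep a x t - x‖ = |t - ‖⟪a, x⟫_ℂ‖| / ‖a‖ := by
  rw [kaczmarzStep, add_sub_cancel_left, norm_div_norm_sq_smul, norm_ofReal_mul_phase_sub]

lemma abs_sub_norm_inner_le {a x w : E} {t : ℝ} (hw : ‖⟪a, w⟫_ℂ‖ = t) :
    |t - ‖⟪a, x⟫_ℂ‖| ≤ ‖a‖ * ‖w - x‖ :=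
  calc |t - ‖⟪a, x⟫_ℂ‖| ≤ ‖⟪a, w⟫_ℂ - ⟪a, x⟫_ℂ‖ := hw ▸ abs_norm_sub_norm_le _ _
    _ = ‖⟪a, w - x⟫_ℂ‖ := by rw [inner_sub_right]
    _ ≤ ‖a‖ * ‖w - x‖ := norm_inner_le_norm _ _

theorem norm_kaczmarzStep_sub_le {a : E} (ha : a ≠ 0) (x : E) {t : ℝ} {w : E}
    (hw : ‖⟪a, w⟫_ℂ‖ = t) : ‖kaczmarzStep a x t - x‖ ≤ ‖w - x‖ := by
  rw [norm_kaczmarzStep_sub, div_le_iff₀' (norm_pos_iff.mpr ha)]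
  exact abs_sub_norm_inner_le hw

end Kaczmarz

lemma evnorm_eq_norm_toLp {n : ℕ} (v : Fin n → ℂ) :
    evnorm v = ‖WithLp.toLp 2 v‖ := by
  simp [evnorm, EuclideanSpace.norm_eq]

lemma hinner_eq_inner_toLp {n : ℕ} (a x : Fin n → ℂ) :
    hinner a x = ⟪WithLp.toLp 2 a, WithLp.toLp 2 x⟫_ℂ := by
  simp [hinner, PiLp.inner_apply, mul_comm]

lemma ofLp_kaczmarzStep_toLp {n : ℕ} (a x : Fin n → ℂ) (t : ℝ) :
    WithLp.ofLp (kaczmarzStep (WithLp.toLp 2 a) (WithLp.toLp 2 x) t) =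
      x + (((t : ℂ) * phase (hinner a x) - hinner a x) / ((evnorm a ^ 2 : ℝ) : ℂ)) • a := by
  simp [kaczmarzStep, hinner_eq_inner_toLp, evnorm_eq_norm_toLp]

theorem stmt3_general {n : ℕ} (a x : Fin n → ℂ) (ha : a ≠ 0) (yr : ℝ)
    (xplus : Fin n → ℂ)
    (hxplus : xplus =
      x + ((((Real.sqrt yr : ℝ) : ℂ) * phase (hinner a x) - hinner a x) /
        ((evnorm a ^ 2 : ℝ) : ℂ)) • a) :
    ‖hinner a xplus‖ = Real.sqrt yr ∧
    ∀ w : Fin n → ℂ, ‖hinner a w‖ = Real.sqrt yr →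
      evnorm (xplus - x) ≤ evnorm (w - x) := by
  have ha_toLp : WithLp.toLp 2 a ≠ 0 := by simpa using ha
  rw [← ofLp_kaczmarzStep_toLp] at hxplus
  subst hxplus
  refine ⟨?_, fun w hw => ?_⟩
  · rw [hinner_eq_inner_toLp, WithLp.toLp_ofLp]
    exact norm_inner_kaczmarzStep ha_toLp _ (Real.sqrt_nonneg yr)
  · rw [hinner_eq_inner_toLp] at hw
    rw [evnorm_eq_norm_toLp, evnorm_eq_norm_toLp, WithLp.toLp_sub, WithLp.toLp_sub,
      WithLp.toLp_ofLp]
    exact norm_kaczmarzStep_sub_le ha_toLp _ hw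

/-- The simple Kaczmarz update is a metric projection of x onto
the nonconvex set { w : |⟨a,w⟩| = √yᵣ }. -/
theorem stmt3 {n : ℕ} (a x : Fin n → ℂ) (ha : a ≠ 0) (yr : ℝ) (hyr : 0 ≤ yr)
    (xplus : Fin n → ℂ)
    (hxplus : xplus =
      x + ((((Real.sqrt yr : ℝ) : ℂ) * phase (hinner a x) - hinner a x) /
        ((evnorm a ^ 2 : ℝ) : ℂ)) • a) :
    ‖hinner a xplus‖ = Real.sqrt yr ∧
    ∀ w : Fin n → ℂ, ‖hinner a w‖ = Real.sqrt yr →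
      evnorm (xplus - x) ≤ evnorm (w - x) :=
  stmt3_general a x ha yr xplus hxplus
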